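/- arXiv:1508.02597 — 2 statements merged into one kernel-verified Lean document; each statement's English description precedes it below -/
import Mathlib

section
/- Let f : ℝ → ℝ be continuous with f(x+1)=f(x)+1, and p ∈ ℤ, q ≥ 1. If f^q(x) - p ≤ x for all x ∈ ℝ, then for every z ∈ ℝ the sequence (fⁿ(z)-z)/n has all its limit points in (-∞, p/q]; that is, limsup_{n→∞}(fⁿ(z)-z)/n ≤ p/q. -/
theorem stmt_7 (f : ℝ → ℝ) (hf : Continuous f) (hlift : ∀ x, f (x + 1) = f x + 1)
    (p : ℤ) (q : ℕ) (hq : 1 ≤ q) (hle : ∀ x, f^[q] x - p ≤ x) :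
    ∀ z : ℝ, Filter.limsup (fun n : ℕ => (f^[n] z - z) / n) Filter.atTop ≤ (p : ℝ) / q := by
  intro z
  -- The displacement x ↦ f x - x is continuous and 1-periodic, hence bounded.
  obtain ⟨C, hC0, hC⟩ : ∃ C : ℝ, 0 ≤ C ∧ ∀ x, |f x - x| ≤ C := by
    have hper : Function.Periodic (fun x => f x - x) 1 := by
      intro x; simp only [hlift x]; ring
    have hcont : Continuous fun x => f x - x := hf.sub continuous_id
    obtain ⟨C, hC⟩ := (isCompact_Icc (a := (0:ℝ)) (b := 1)).exists_bound_of_continuousOn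
      hcont.continuousOn
    refine ⟨C, le_trans (abs_nonneg _) (hC 0 (by norm_num)), fun x => ?_⟩
    have h1 : f x - x = f (Int.fract x) - Int.fract x := by
      have := hper.sub_int_mul_eq (x := x) ⌊x⌋
      simp only [mul_one] at this
      rw [Int.fract]
      exact this.symm
    rw [h1]
    exact hC _ ⟨Int.fract_nonneg x, le_of_lt (Int.fract_lt_one x)⟩
  -- Iterate displacement bounds.
  have hiter : ∀ r : ℕ, ∀ x : ℝ, x - r * C ≤ f^[r] x ∧ f^[r] x ≤ x + r * C := by
    intro r
    induction r with
    | zero => intro x; simp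
    | succ r ih =>
      intro x
      obtain ⟨h1, h2⟩ := ih x
      have h3 := abs_le.mp (hC (f^[r] x))
      rw [Function.iterate_succ_apply']
      constructor
      · push_cast; nlinarith [h3.1, h3.2]
      · push_cast; nlinarith [h3.1, h3.2]
  -- f^[q*k] x ≤ x + k*p.
  have hq' : ∀ x, f^[q] x ≤ x + p := fun x => by linarith [hle x]
  have hkq : ∀ k : ℕ, ∀ x : ℝ, f^[q * k] x ≤ x + k * p := by
    intro k
    induction k with
    | zero => intro x; simp
    | succ k ih =>
      intro x
      have : q * (k + 1) = q + q * k := by ring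
      rw [this, Function.iterate_add_apply]
      calc f^[q] (f^[q * k] x) ≤ f^[q * k] x + p := hq' _
        _ ≤ x + k * p + p := by linarith [ih x]
        _ = x + (k + 1 : ℕ) * p := by push_cast; ring
  set u : ℕ → ℝ := fun n => (f^[n] z - z) / n with hu
  have hqR : (0:ℝ) < q := by exact_mod_cast hq
  -- lower bound for coboundedness
  have hlb : ∀ n, -C ≤ u n := by
    intro n
    rcases Nat.eq_zero_or_pos n with h | h
    · simp [hu, h]; linarith
    · have hnR : (0:ℝ) < n := by exact_mod_cast h
      have := (hiter n z).1
      rw [hu]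
      rw [le_div_iff₀ hnR]
      nlinarith
  have hcob : Filter.IsCoboundedUnder (· ≤ ·) Filter.atTop u :=
    Filter.IsBoundedUnder.isCoboundedUnder_le
      (Filter.isBoundedUnder_of ⟨-C, fun n => hlb n⟩)
  -- main estimate : u n ≤ p/q + D/n for n ≥ 1
  set D : ℝ := |(p:ℝ)| + q * C with hD
  have hmain : ∀ n : ℕ, 1 ≤ n → u n ≤ (p:ℝ)/q + D / n := by
    intro n hn
    have hnR : (0:ℝ) < n := by exact_mod_cast hn
    set k := n / q with hk
    set r := n % q with hr
    have hrq : r < q := Nat.mod_lt _ hq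
    have hnrk : n = r + q * k := by rw [hr, hk]; exact (Nat.mod_add_div n q).symm
    have h1 : f^[n] z ≤ z + k * p + r * C := by
      rw [hnrk, Function.iterate_add_apply]
      calc f^[r] (f^[q*k] z) ≤ f^[q*k] z + r * C := (hiter r _).2
        _ ≤ z + k * p + r * C := by linarith [hkq k z]
    have hrR : (r:ℝ) ≤ q := by exact_mod_cast hrq.le
    have hrR0 : (0:ℝ) ≤ r := Nat.cast_nonneg r
    have hnq : (n:ℝ) = r + q * k := by exact_mod_cast hnrk
    -- k*p ≤ n*(p/q) + |p|
    have h2 : (k:ℝ) * p ≤ n * ((p:ℝ)/q) + |(p:ℝ)| := by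
      rw [hnq]
      have habs1 : -(|(p:ℝ)|) ≤ p := neg_abs_le _
      have : (r:ℝ) * ((p:ℝ)/q) + |(p:ℝ)| ≥ 0 := by
        have e3 : (-(p:ℝ))/q ≤ |(p:ℝ)|/q := by gcongr; exact neg_le_abs _
        have e5 : (r:ℝ)*((-(p:ℝ))/q) ≤ r*(|(p:ℝ)|/q) :=
          mul_le_mul_of_nonneg_left e3 hrR0
        have e1 : (r:ℝ)*(|(p:ℝ)|/q) ≤ q*(|(p:ℝ)|/q) :=
          mul_le_mul_of_nonneg_right hrR (by positivity)
        have e2 : (q:ℝ)*(|(p:ℝ)|/q) = |(p:ℝ)| := by field_simp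
        have e4 : (r:ℝ)*((-(p:ℝ))/q) = -((r:ℝ)*((p:ℝ)/q)) := by ring
        linarith
      have hexp : ((r:ℝ) + q * k) * ((p:ℝ)/q) = r * ((p:ℝ)/q) + k * p := by
        field_simp
      rw [hexp]; linarith
    have h3 : f^[n] z - z ≤ n * ((p:ℝ)/q) + D := by
      have : (r:ℝ) * C ≤ q * C := mul_le_mul_of_nonneg_right hrR hC0
      rw [hD]; linarith
    rw [hu]
    rw [div_le_iff₀ hnR] at *
    calc f^[n] z - z ≤ n * ((p:ℝ)/q) + D := h3
      _ = ((p:ℝ)/q + D/n) * n := by field_simp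
  -- conclude
  refine le_of_forall_pos_le_add fun ε hε => ?_
  refine Filter.limsup_le_of_le hcob ?_
  have htend : Filter.Tendsto (fun n : ℕ => D / n) Filter.atTop (nhds 0) :=
    tendsto_const_div_atTop_nhds_zero_nat D
  have hev : ∀ᶠ n : ℕ in Filter.atTop, D / n ≤ ε :=
    htend.eventually_le_const hε
  filter_upwards [hev, Filter.eventually_ge_atTop 1] with n h1 h2
  linarith [hmain n h2]
end

section
/- Let f : ℝ → ℝ be continuous with f(x+1)=f(x)+1 and suppose g := f^q - p satisfies g(x) ≤ x for all x and g(x₀) < x₀ for some x₀. Then there exists ε > 0 such that for every continuous f' with f'(x+1)=f'(x)+1 and sup|f'-f| < ε, the map g' := f'^q - p satisfies g'ⁿ(x) ≤ x₀ for all x ≤ x₀ and all n ≥ 1. -/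
/-- integer lift property -/
lemma lift_int {f : ℝ → ℝ} (hlift : ∀ x, f (x + 1) = f x + 1) :
    ∀ (x : ℝ) (n : ℤ), f (x + n) = f x + n := by
  have hnat : ∀ (x : ℝ) (k : ℕ), f (x + k) = f x + k := by
    intro x k
    induction k with
    | zero => simp
    | succ m ih =>
        push_cast
        rw [← add_assoc, hlift, ih]
        push_cast
        ring
  have hneg : ∀ (x : ℝ) (k : ℕ), f (x - k) = f x - k := by
    intro x k
    have := hnat (x - k) k
    rw [sub_add_cancel] at this
    linarith
  intro x n
  obtain ⟨k, rfl | rfl⟩ := Int.eq_nat_or_neg n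
  · push_cast; exact hnat x k
  · push_cast
    have := hneg x k
    rw [show x + -(k:ℝ) = x - k by ring, this]
    ring

/-- nat lift for iterates -/
lemma iterate_lift_nat {f : ℝ → ℝ} (hlift : ∀ x, f (x + 1) = f x + 1) (q : ℕ) :
    ∀ (x : ℝ) (n : ℕ), f^[q] (x + n) = f^[q] x + n := by
  have hl : ∀ (x : ℝ) (n : ℕ), f (x + n) = f x + n := by
    intro x n
    have := lift_int hlift x n
    simpa using this
  induction q with
  | zero => simp
  | succ k ih =>
      intro x n
      rw [Function.iterate_succ_apply, Function.iterate_succ_apply, hl, ih]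

/-- uniform continuity of a lift -/
lemma lift_uc {f : ℝ → ℝ} (hf : Continuous f) (hlift : ∀ x, f (x + 1) = f x + 1) :
    ∀ η > (0:ℝ), ∃ δ > (0:ℝ), ∀ a b : ℝ, |a - b| < δ → |f a - f b| < η := by
  intro η hη
  have hK : IsCompact (Set.Icc (-1:ℝ) 2) := isCompact_Icc
  have huc : UniformContinuousOn f (Set.Icc (-1:ℝ) 2) :=
    hK.uniformContinuousOn_of_continuous hf.continuousOn
  rw [Metric.uniformContinuousOn_iff] at huc
  obtain ⟨δ, hδ, hδ'⟩ := huc η hη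
  refine ⟨min δ 1, by positivity, ?_⟩
  intro a b hab
  have hab1 : |a - b| < δ := lt_of_lt_of_le hab (min_le_left _ _)
  have hab2 : |a - b| < 1 := lt_of_lt_of_le hab (min_le_right _ _)
  set n : ℤ := ⌊a⌋ with hn
  have ha1 : (0:ℝ) ≤ a - n := by
    have : (n:ℝ) ≤ a := Int.floor_le a
    linarith
  have ha2 : a - n < 1 := by
    have : a < n + 1 := Int.lt_floor_add_one a
    linarith
  have hb1 : (-1:ℝ) ≤ b - n := by
    have := abs_lt.1 hab2; linarith
  have hb2 : b - n ≤ 2 := by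
    have := abs_lt.1 hab2; linarith
  have hma : a - n ∈ Set.Icc (-1:ℝ) 2 := ⟨by linarith, by linarith⟩
  have hmb : b - n ∈ Set.Icc (-1:ℝ) 2 := ⟨hb1, hb2⟩
  have hd : dist (a - n) (b - n) < δ := by
    rw [Real.dist_eq]
    have : a - n - (b - n) = a - b := by ring
    rw [this]; exact hab1
  have := hδ' _ hma _ hmb hd
  rw [Real.dist_eq] at this
  have hfa : f (a - n + n) = f (a - n) + n := lift_int hlift _ n
  have hfb : f (b - n + n) = f (b - n) + n := lift_int hlift _ n
  have e1 : f a = f (a - n) + n := by rw [← hfa]; ring_nf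
  have e2 : f b = f (b - n) + n := by rw [← hfb]; ring_nf
  rw [e1, e2]
  have h4 : f (a - ↑n) + ↑n - (f (b - ↑n) + ↑n) = f (a - ↑n) - f (b - ↑n) := by ring
  rw [h4]
  exact ‹|f (a - ↑n) - f (b - ↑n)| < η›

/-- closeness of iterates -/
lemma iter_close {f : ℝ → ℝ} (hf : Continuous f) (hlift : ∀ x, f (x + 1) = f x + 1) :
    ∀ (k : ℕ) (δ : ℝ), 0 < δ → ∃ ε > (0:ℝ), ε ≤ δ ∧
      ∀ f' : ℝ → ℝ, (∀ x, |f' x - f x| < ε) → ∀ x, |f'^[k] x - f^[k] x| < δ := by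
  intro k
  induction k with
  | zero =>
      intro δ hδ
      exact ⟨δ, hδ, le_refl _, fun f' _ x => by simpa using hδ⟩
  | succ m ih =>
      intro δ hδ
      obtain ⟨η, hη, hη'⟩ := lift_uc hf hlift (δ/2) (by positivity)
      obtain ⟨ε, hε, hεle, hε'⟩ := ih (min η (δ/2)) (by positivity)
      refine ⟨ε, hε, le_trans hεle (le_trans (min_le_right _ _) (by linarith)), ?_⟩
      intro f' hf' x
      have h1 : |f'^[m] x - f^[m] x| < min η (δ/2) := hε' f' hf' x
      have h2 : |f (f'^[m] x) - f (f^[m] x)| < δ/2 :=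
        hη' _ _ (lt_of_lt_of_le h1 (min_le_left _ _))
      have h3 : |f' (f'^[m] x) - f (f'^[m] x)| < ε := hf' _
      rw [Function.iterate_succ_apply', Function.iterate_succ_apply']
      calc |f' (f'^[m] x) - f (f^[m] x)|
          ≤ |f' (f'^[m] x) - f (f'^[m] x)| + |f (f'^[m] x) - f (f^[m] x)| := by
            exact abs_sub_le _ _ _
        _ < ε + δ/2 := by linarith
        _ ≤ δ := by
            have : ε ≤ δ/2 := le_trans hεle (min_le_right _ _)
            linarith

theorem stmt_10 (f : ℝ → ℝ) (hf : Continuous f) (hlift : ∀ x, f (x + 1) = f x + 1)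
    (p : ℤ) (q : ℕ) (hq : 1 ≤ q)
    (hle : ∀ x, f^[q] x - p ≤ x) (x₀ : ℝ) (h₀ : f^[q] x₀ - p < x₀) :
    ∃ ε > 0, ∀ f' : ℝ → ℝ, Continuous f' → (∀ x, f' (x + 1) = f' x + 1) →
      (∀ x, |f' x - f x| < ε) →
      ∀ x, x ≤ x₀ → ∀ n : ℕ, 1 ≤ n → (fun y => f'^[q] y - p)^[n] x ≤ x₀ := by
  set G : ℝ → ℝ := fun y => f^[q] y - p with hG
  have hGc : Continuous G := (hf.iterate q).sub continuous_const
  -- max of G on [x₀-1, x₀] is < x₀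
  have hne : Set.Nonempty (Set.Icc (x₀ - 1) x₀) := Set.nonempty_Icc.2 (by linarith)
  obtain ⟨z, hz, hzmax⟩ := isCompact_Icc.exists_isMaxOn hne hGc.continuousOn
  have hM : G z < x₀ := by
    rcases lt_or_eq_of_le hz.2 with h | h
    · exact lt_of_le_of_lt (hle z) h
    · rw [h]; exact h₀
  set δ := x₀ - G z with hδdef
  have hδeq : δ = x₀ - (f^[q] z - p) := rfl
  have hδ : 0 < δ := by rw [hδeq]; simp only [hG] at hM; linarith
  obtain ⟨ε, hε, hεle, hεcl⟩ := iter_close hf hlift q δ hδ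
  refine ⟨ε, hε, ?_⟩
  intro f' hf'c hf'lift hf'close x hx n hn
  set G' : ℝ → ℝ := fun y => f'^[q] y - p with hG'
  -- G' < x₀ on the interval
  have key1 : ∀ y ∈ Set.Icc (x₀ - 1) x₀, G' y < x₀ := by
    intro y hy
    have h1 : G y ≤ G z := hzmax hy
    have h2 : |f'^[q] y - f^[q] y| < δ := hεcl f' hf'close y
    have h3 : f'^[q] y - f^[q] y < δ := (abs_lt.1 h2).2
    have hδe : δ = x₀ - (f^[q] z - ↑p) := rfl
    have h1' : f^[q] y - ↑p ≤ f^[q] z - ↑p := h1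
    show f'^[q] y - ↑p < x₀
    linarith
  -- G' y ≤ x₀ for all y ≤ x₀
  have key2 : ∀ y ≤ x₀, G' y ≤ x₀ := by
    intro y hy
    set k : ℕ := ⌊x₀ - y⌋₊ with hk
    have hk1 : (k : ℝ) ≤ x₀ - y := Nat.floor_le (by linarith)
    have hk2 : x₀ - y < k + 1 := Nat.lt_floor_add_one _
    have hmem : y + k ∈ Set.Icc (x₀ - 1) x₀ := ⟨by linarith, by linarith⟩
    have hlt : G' (y + k) < x₀ := key1 _ hmem
    have hshift : f'^[q] (y + k) = f'^[q] y + k := iterate_lift_nat hf'lift q y k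
    have : G' (y + k) = G' y + k := by simp only [hG', hshift]; ring
    rw [this] at hlt
    have hk0 : (0:ℝ) ≤ k := Nat.cast_nonneg k
    linarith
  -- induction on n
  induction n, hn using Nat.le_induction with
  | base => simpa using key2 x hx
  | succ m hm ih =>
      rw [Function.iterate_succ_apply']
      exact key2 _ ih
end
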